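/- Let 0 < r < R and define G(x) = R·g(x/R) - r·g(x/r) on [0,r] where g(x) = (√(1-x²) - x·arccos(x))/π. Set γ = G(r) + |G'(r)|·r and define T : [G(0), γ] → [0,r] implicitly by G(T(y)) + |G'(r)|·T(y) = y. Then T is strictly increasing and satisfies γ - y ≍ (r - T(y))^{3/2}, i.e., r - T(y) ≍ (γ - y)^{2/3} for y ∈ [G(0), γ]. -/

import Mathlib

noncomputable def g (x : ℝ) : ℝ := (Real.sqrt (1 - x^2) - x * Real.arccos x) / Real.pi

noncomputable def G (r R x : ℝ) : ℝ := R * g (x / R) - r * g (x / r)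

open Real

lemma continuous_g : Continuous g := by
  unfold g
  exact ((Real.continuous_sqrt.comp (by continuity)).sub
    (continuous_id.mul Real.continuous_arccos)).div_const π

lemma hasDerivAt_g {x : ℝ} (h1 : -1 < x) (h2 : x < 1) :
    HasDerivAt g (-arccos x / π) x := by
  have hx2 : (0:ℝ) < 1 - x^2 := by nlinarith
  have hs : Real.sqrt (1 - x^2) ≠ 0 := (Real.sqrt_pos.mpr hx2).ne'
  have hinner : HasDerivAt (fun y : ℝ => 1 - y^2) (-(2*x)) x := by
    simpa using (hasDerivAt_pow 2 x).const_sub 1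
  have hsqrt : HasDerivAt (fun y : ℝ => Real.sqrt (1 - y^2))
      (1 / (2 * Real.sqrt (1 - x^2)) * (-(2*x))) x :=
    (Real.hasDerivAt_sqrt hx2.ne').comp x hinner
  have harc : HasDerivAt arccos (-(1 / Real.sqrt (1 - x^2))) x :=
    Real.hasDerivAt_arccos h1.ne' h2.ne
  have hmul : HasDerivAt (fun y => y * arccos y)
      (1 * arccos x + x * (-(1 / Real.sqrt (1 - x^2)))) x :=
    (hasDerivAt_id x).mul harc
  have hd := (hsqrt.sub hmul).div_const π
  have e1 : 1 / (2 * Real.sqrt (1 - x^2)) * (-(2*x)) = -(x / Real.sqrt (1 - x^2)) := by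
    field_simp
  have e2 : x * (-(1 / Real.sqrt (1 - x^2))) = -(x / Real.sqrt (1 - x^2)) := by
    field_simp
  have : (1 / (2 * Real.sqrt (1 - x^2)) * (-(2*x)) -
      (1 * arccos x + x * (-(1 / Real.sqrt (1 - x^2))))) / π = -arccos x / π := by
    rw [e1, e2]; ring
  rw [this] at hd
  exact hd

lemma hasDerivAt_G {r R x : ℝ} (hr : 0 < r) (hR : r < R) (hx0 : 0 ≤ x) (hxr : x < r) :
    HasDerivAt (G r R) ((arccos (x/r) - arccos (x/R)) / π) x := by
  have hR0 : 0 < R := hr.trans hR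
  have hdR : HasDerivAt (fun y : ℝ => y / R) (1/R) x := by
    simpa using (hasDerivAt_id x).div_const R
  have hdr : HasDerivAt (fun y : ℝ => y / r) (1/r) x := by
    simpa using (hasDerivAt_id x).div_const r
  have hgR : HasDerivAt (fun y : ℝ => g (y / R)) (-arccos (x/R) / π * (1/R)) x := by
    refine (hasDerivAt_g ?_ ?_).comp x hdR
    · calc (-1:ℝ) < 0 := by norm_num
        _ ≤ x / R := by positivity
    · rw [div_lt_one hR0]; linarith
  have hgr : HasDerivAt (fun y : ℝ => g (y / r)) (-arccos (x/r) / π * (1/r)) x := by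
    refine (hasDerivAt_g ?_ ?_).comp x hdr
    · calc (-1:ℝ) < 0 := by norm_num
        _ ≤ x / r := by positivity
    · rw [div_lt_one hr]; exact hxr
  have := (hgR.const_mul R).sub (hgr.const_mul r)
  have heq : R * (-arccos (x/R) / π * (1/R)) - r * (-arccos (x/r) / π * (1/r))
      = (arccos (x/r) - arccos (x/R)) / π := by
    field_simp
    ring
  rw [heq] at this
  exact this

noncomputable def Aaux (r R x : ℝ) : ℝ :=
    (arccos (x/r) - arccos (x/R) + arccos (r/R)) / π

noncomputable def Faux (r R x : ℝ) : ℝ := G r R x + (arccos (r/R) / π) * x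

lemma continuous_Faux (r R : ℝ) : Continuous (Faux r R) := by
  unfold Faux G
  exact ((continuous_const.mul (continuous_g.comp (continuous_id.div_const R))).sub
    (continuous_const.mul (continuous_g.comp (continuous_id.div_const r)))).add
    (continuous_const.mul continuous_id)

lemma hasDerivAt_Faux {r R x : ℝ} (hr : 0 < r) (hR : r < R) (hx0 : 0 ≤ x) (hxr : x < r) :
    HasDerivAt (Faux r R) (Aaux r R x) x := by
  have h1 := (hasDerivAt_G hr hR hx0 hxr).add
    ((hasDerivAt_id x).const_mul (arccos (r/R) / π))
  have : (arccos (x/r) - arccos (x/R)) / π + arccos (r/R) / π * 1 = Aaux r R x := by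
    unfold Aaux; ring
  rw [this] at h1
  exact h1

/-- lower bound for arccos -/
lemma sqrt_le_arccos {u : ℝ} (h1 : -1 ≤ u) (h2 : u ≤ 1) :
    Real.sqrt (2 * (1 - u)) ≤ arccos u := by
  have hc : Real.cos (arccos u) = u := Real.cos_arccos h1 h2
  have hb : 1 - (arccos u)^2 / 2 ≤ u := by
    calc 1 - (arccos u)^2/2 ≤ Real.cos (arccos u) := Real.one_sub_sq_div_two_le_cos
      _ = u := hc
  calc Real.sqrt (2 * (1 - u)) ≤ Real.sqrt ((arccos u)^2) := by
        apply Real.sqrt_le_sqrt; nlinarith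
    _ = arccos u := Real.sqrt_sq (Real.arccos_nonneg u)

/-- upper bound for arccos -/
lemma arccos_le_sqrt {u : ℝ} (h1 : -1 ≤ u) (h2 : u ≤ 1) :
    arccos u ≤ π * Real.sqrt ((1 - u) / 2) := by
  set θ := arccos u with hθ
  have hθ0 : 0 ≤ θ := Real.arccos_nonneg u
  have hθπ : θ ≤ π := Real.arccos_le_pi u
  have hsin : θ / π ≤ Real.sin (θ / 2) := by
    have := Real.mul_le_sin (x := θ/2) (by positivity) (by linarith)
    calc θ / π = 2 / π * (θ / 2) := by field_simp
      _ ≤ Real.sin (θ / 2) := this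
  have hsq : Real.sin (θ / 2) ^ 2 = (1 - u) / 2 := by
    have := Real.sin_sq_eq_half_sub (θ / 2)
    rw [show 2 * (θ/2) = θ by ring] at this
    rw [this, hθ, Real.cos_arccos h1 h2]; ring
  have hle : (θ / π)^2 ≤ (1 - u) / 2 := by
    rw [← hsq]
    have h0 : 0 ≤ θ / π := by positivity
    nlinarith [hsin]
  have : θ / π ≤ Real.sqrt ((1 - u) / 2) := by
    rw [show θ / π = Real.sqrt ((θ/π)^2) from (Real.sqrt_sq (by positivity)).symm]
    exact Real.sqrt_le_sqrt hle
  calc θ = π * (θ / π) := by field_simp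
    _ ≤ π * Real.sqrt ((1 - u) / 2) := by
        exact mul_le_mul_of_nonneg_left this Real.pi_pos.le

lemma sqrt_one_sub_div_sq {c y : ℝ} (hc : 0 < c) (hy : y^2 ≤ c^2) :
    Real.sqrt (1 - (y/c)^2) * c = Real.sqrt (c^2 - y^2) := by
  have h0 : 0 ≤ 1 - (y/c)^2 := by
    have h : (y/c)^2 ≤ 1 := by rw [div_pow, div_le_one (by positivity)]; exact hy
    linarith
  calc Real.sqrt (1 - (y/c)^2) * c
      = Real.sqrt (1 - (y/c)^2) * Real.sqrt (c^2) := by rw [Real.sqrt_sq hc.le]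
    _ = Real.sqrt ((1 - (y/c)^2) * c^2) := (Real.sqrt_mul h0 (c^2)).symm
    _ = Real.sqrt (c^2 - y^2) := by congr 1; field_simp

lemma hasDerivAt_arccos_div {c y : ℝ} (hc : 0 < c) (h1 : -c < y) (h2 : y < c) :
    HasDerivAt (fun y : ℝ => arccos (y/c)) (-(1 / Real.sqrt (c^2 - y^2))) y := by
  have hd : HasDerivAt (fun y : ℝ => y / c) (1/c) y := by
    simpa using (hasDerivAt_id y).div_const c
  have h1' : y / c ≠ -1 := by
    rw [ne_eq, div_eq_iff hc.ne']; intro h; nlinarith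
  have h2' : y / c ≠ 1 := by
    rw [ne_eq, div_eq_iff hc.ne']; intro h; nlinarith
  have hcomp := (Real.hasDerivAt_arccos h1' h2').comp y hd
  have key : -(1 / Real.sqrt (1 - (y/c)^2)) * (1/c) = -(1 / Real.sqrt (c^2 - y^2)) := by
    rw [← sqrt_one_sub_div_sq hc (by nlinarith)]
    have hs : Real.sqrt (1 - (y/c)^2) ≠ 0 := by
      refine (Real.sqrt_pos.mpr ?_).ne'
      have : (y/c)^2 < 1 := by rw [div_pow, div_lt_one (by positivity)]; nlinarith
      linarith
    field_simp
  rw [← key]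
  exact hcomp

/-- `y ↦ arccos (y/r) - arccos (y/R)` is strictly decreasing on `[0,r]`. -/
lemma strictAnti_hdiff {r R : ℝ} (hr : 0 < r) (hR : r < R) :
    StrictAntiOn (fun y => arccos (y/r) - arccos (y/R)) (Set.Icc 0 r) := by
  have hR0 : 0 < R := hr.trans hR
  apply strictAntiOn_of_deriv_neg (convex_Icc 0 r)
  · exact ((Real.continuous_arccos.comp (continuous_id.div_const r)).sub
      (Real.continuous_arccos.comp (continuous_id.div_const R))).continuousOn
  · intro y hy
    rw [interior_Icc] at hy
    obtain ⟨hy0, hyr⟩ := hy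
    have hd := (hasDerivAt_arccos_div hr (by linarith) hyr).sub
      (hasDerivAt_arccos_div hR0 (by linarith) (by linarith))
    rw [show deriv (fun y => arccos (y / r) - arccos (y / R)) y = _ from hd.deriv]
    have h1 : Real.sqrt (r^2 - y^2) < Real.sqrt (R^2 - y^2) :=
      Real.sqrt_lt_sqrt (by nlinarith) (by nlinarith)
    have h2 : 0 < Real.sqrt (r^2 - y^2) := Real.sqrt_pos.mpr (by nlinarith)
    have := one_div_lt_one_div_of_lt h2 h1
    linarith

lemma arccos_div_mvt {r R : ℝ} (hr : 0 < r) (hR : r < R) {x : ℝ} (hx0 : 0 ≤ x) (hxr : x ≤ r) :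
    arccos (x/R) - arccos (r/R) ≤ (r - x) / Real.sqrt (R^2 - r^2) := by
  have hR0 : 0 < R := hr.trans hR
  set s := Real.sqrt (R^2 - r^2) with hsdef
  have hs : 0 < s := Real.sqrt_pos.mpr (by nlinarith)
  have hmono : MonotoneOn (fun y : ℝ => arccos (y/R) + y / s) (Set.Icc 0 r) := by
    apply monotoneOn_of_deriv_nonneg (convex_Icc 0 r)
    · exact ((Real.continuous_arccos.comp (continuous_id.div_const R)).add
        (continuous_id.div_const s)).continuousOn
    · intro y hy
      rw [interior_Icc] at hy
      exact ((hasDerivAt_arccos_div hR0 (by linarith [hy.1]) (by linarith [hy.2])).add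
        (by simpa using (hasDerivAt_id y).div_const s)).differentiableAt.differentiableWithinAt
    · intro y hy
      rw [interior_Icc] at hy
      obtain ⟨hy0, hyr⟩ := hy
      have hd := (hasDerivAt_arccos_div hR0 (by linarith) (by linarith)).add
        (show HasDerivAt (fun y : ℝ => y / s) (1/s) y by
          simpa using (hasDerivAt_id y).div_const s)
      rw [show deriv (fun y => arccos (y / R) + y / s) y = _ from hd.deriv]
      have h1 : s ≤ Real.sqrt (R^2 - y^2) := Real.sqrt_le_sqrt (by nlinarith)
      have h2 := one_div_le_one_div_of_le hs h1
      linarith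
  have hur := hmono (Set.mem_Icc.mpr ⟨hx0, hxr⟩) (Set.mem_Icc.mpr ⟨hr.le, le_refl r⟩) hxr
  simp only at hur
  have hsub : (r - x) / s = r / s - x / s := sub_div r x s
  linarith

/-- positivity of Aaux on [0, r) -/
lemma Aaux_pos {r R x : ℝ} (hr : 0 < r) (hR : r < R) (hx0 : 0 ≤ x) (hxr : x < r) :
    0 < Aaux r R x := by
  have h := strictAnti_hdiff hr hR (Set.mem_Icc.mpr ⟨hx0, hxr.le⟩)
    (Set.mem_Icc.mpr ⟨hr.le, le_refl r⟩) hxr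
  simp only at h
  rw [div_self hr.ne', Real.arccos_one] at h
  unfold Aaux
  have := Real.pi_pos
  apply div_pos _ this
  linarith

lemma Aaux_le {r R x : ℝ} (hr : 0 < r) (hR : r < R) (hx0 : 0 ≤ x) (hxr : x ≤ r) :
    Aaux r R x ≤ Real.sqrt (r - x) / Real.sqrt (2*r) := by
  have hR0 : 0 < R := hr.trans hR
  have hpi := Real.pi_pos
  have h1 : arccos (r/R) ≤ arccos (x/R) := by
    refine Real.strictAntiOn_arccos.antitoneOn (Set.mem_Icc.mpr ⟨?_, ?_⟩)
      (Set.mem_Icc.mpr ⟨?_, ?_⟩) (by gcongr)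
    · calc (-1:ℝ) ≤ 0 := by norm_num
        _ ≤ x / R := by positivity
    · rw [div_le_one hR0]; linarith
    · calc (-1:ℝ) ≤ 0 := by norm_num
        _ ≤ r / R := by positivity
    · rw [div_le_one hR0]; linarith
  have h2 : arccos (x/r) ≤ π * Real.sqrt ((1 - x/r)/2) := by
    apply arccos_le_sqrt
    · calc (-1:ℝ) ≤ 0 := by norm_num
        _ ≤ x / r := by positivity
    · rw [div_le_one hr]; exact hxr
  have h3 : Real.sqrt ((1 - x/r)/2) = Real.sqrt (r-x) / Real.sqrt (2*r) := by
    have he : (1 - x/r)/2 = (r-x) / (2*r) := by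
      field_simp
    rw [he, Real.sqrt_div (show (0:ℝ) ≤ r - x by linarith)]
  unfold Aaux
  rw [div_le_iff₀ hpi]
  calc arccos (x/r) - arccos (x/R) + arccos (r/R) ≤ arccos (x/r) := by linarith
    _ ≤ π * Real.sqrt ((1 - x/r)/2) := h2
    _ = Real.sqrt (r-x) / Real.sqrt (2*r) * π := by rw [h3]; ring

lemma Aaux_lower {r R : ℝ} (hr : 0 < r) (hR : r < R) :
    ∃ a : ℝ, 0 < a ∧ ∀ x ∈ Set.Icc (0:ℝ) r, a * Real.sqrt (r - x) ≤ Aaux r R x := by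
  have hR0 : 0 < R := hr.trans hR
  have hpi := Real.pi_pos
  set s := Real.sqrt (R^2 - r^2) with hs_def
  have hs : 0 < s := Real.sqrt_pos.mpr (by nlinarith)
  set δ := (R^2 - r^2)/(2*r) with hδ_def
  have hδ : 0 < δ := div_pos (by nlinarith) (by linarith)
  set x₀ := max (r - δ) (r/2) with hx₀_def
  have hx₀0 : 0 < x₀ := lt_max_of_lt_right (by linarith)
  have hx₀r : x₀ < r := max_lt (by linarith) (by linarith)
  have hA₀ : 0 < Aaux r R x₀ := Aaux_pos hr hR hx₀0.le hx₀r
  have hsr : 0 < Real.sqrt r := Real.sqrt_pos.mpr hr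
  have h2r : (0:ℝ) < 2*r := by linarith
  have hs2r : 0 < Real.sqrt (2*r) := Real.sqrt_pos.mpr h2r
  set b := Real.sqrt (2/r) / 2 with hb_def
  have hbpos : 0 < b := by
    rw [hb_def]
    have : 0 < Real.sqrt (2/r) := Real.sqrt_pos.mpr (by positivity)
    linarith
  have hmul2 : Real.sqrt (2/r) * Real.sqrt (2*r) = 2 := by
    rw [← Real.sqrt_mul (by positivity)]
    rw [show (2/r)*(2*r) = 4 by field_simp; ring]
    rw [show (4:ℝ) = 2^2 by norm_num, Real.sqrt_sq (by norm_num)]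
  have hb' : b = 1 / Real.sqrt (2*r) := by
    rw [hb_def, eq_div_iff hs2r.ne']
    rw [div_mul_eq_mul_div, hmul2]
    norm_num
  refine ⟨min (b/π) (Aaux r R x₀ / Real.sqrt r), lt_min (by positivity) (by positivity), ?_⟩
  intro x hx
  obtain ⟨hx0, hxr⟩ := Set.mem_Icc.mp hx
  have hrx0 : 0 ≤ r - x := by linarith
  by_cases hcase : r - x ≤ δ
  · -- near r : use the arccos asymptotics
    have harc1 : Real.sqrt (2*(1 - x/r)) ≤ arccos (x/r) := by
      apply sqrt_le_arccos
      · calc (-1:ℝ) ≤ 0 := by norm_num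
          _ ≤ x / r := by positivity
      · rw [div_le_one hr]; exact hxr
    have harc2 : arccos (x/R) - arccos (r/R) ≤ (r-x)/s := arccos_div_mvt hr hR hx0 hxr
    have hsplit : Real.sqrt (2*(1-x/r)) = (2*b) * Real.sqrt (r-x) := by
      rw [show 2*(1-x/r) = (2/r)*(r-x) by field_simp]
      rw [Real.sqrt_mul (by positivity)]
      rw [hb_def]; ring
    have hδs : Real.sqrt δ = b * s := by
      rw [hδ_def, Real.sqrt_div (by nlinarith : (0:ℝ) ≤ R^2 - r^2), hb', ← hs_def]
      ring
    have hrs : (r - x)/s ≤ b * Real.sqrt (r-x) := by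
      rw [div_le_iff₀ hs]
      calc r - x = Real.sqrt (r-x) * Real.sqrt (r-x) := (Real.mul_self_sqrt hrx0).symm
        _ ≤ Real.sqrt (r-x) * Real.sqrt δ :=
            mul_le_mul_of_nonneg_left (Real.sqrt_le_sqrt hcase) (Real.sqrt_nonneg _)
        _ = b * Real.sqrt (r-x) * s := by rw [hδs]; ring
    have hP : b * Real.sqrt (r-x) ≤ arccos (x/r) - arccos (x/R) + arccos (r/R) := by
      rw [hsplit] at harc1
      linarith
    unfold Aaux
    calc min (b/π) (Aaux r R x₀ / Real.sqrt r) * Real.sqrt (r-x)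
        ≤ (b/π) * Real.sqrt (r-x) :=
          mul_le_mul_of_nonneg_right (min_le_left _ _) (Real.sqrt_nonneg _)
      _ ≤ (arccos (x/r) - arccos (x/R) + arccos (r/R)) / π := by
          rw [div_mul_eq_mul_div, div_le_div_iff₀ hpi hpi]
          exact mul_le_mul_of_nonneg_right hP hpi.le
  · -- away from r : use positivity and monotonicity
    push_neg at hcase
    have hxx₀ : x < x₀ := lt_of_lt_of_le (by linarith) (le_max_left _ _)
    have hmono := strictAnti_hdiff hr hR (Set.mem_Icc.mpr ⟨hx0, hxr⟩)
      (Set.mem_Icc.mpr ⟨hx₀0.le, hx₀r.le⟩) hxx₀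
    simp only at hmono
    have hAA : Aaux r R x₀ ≤ Aaux r R x := by
      unfold Aaux
      rw [div_le_div_iff₀ hpi hpi]
      nlinarith [hmono.le]
    calc min (b/π) (Aaux r R x₀ / Real.sqrt r) * Real.sqrt (r-x)
        ≤ (Aaux r R x₀ / Real.sqrt r) * Real.sqrt (r-x) :=
          mul_le_mul_of_nonneg_right (min_le_right _ _) (Real.sqrt_nonneg _)
      _ ≤ (Aaux r R x₀ / Real.sqrt r) * Real.sqrt r := by
          apply mul_le_mul_of_nonneg_left (Real.sqrt_le_sqrt (by linarith)) (by positivity)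
      _ = Aaux r R x₀ := by field_simp
      _ ≤ Aaux r R x := hAA

lemma hasDerivAt_rpow32 {r x : ℝ} :
    HasDerivAt (fun y : ℝ => (r - y) ^ ((3:ℝ)/2)) (-((3:ℝ)/2 * (r - x) ^ ((1:ℝ)/2))) x := by
  have h1 : HasDerivAt (fun y : ℝ => r - y) (-1) x := by
    simpa using (hasDerivAt_id x).const_sub r
  have h2 := (Real.hasDerivAt_rpow_const (x := r - x) (p := (3:ℝ)/2)
    (Or.inr (by norm_num))).comp x h1
  have h3 : (3:ℝ)/2 * (r-x) ^ ((3:ℝ)/2 - 1) * (-1) = -((3:ℝ)/2 * (r-x) ^ ((1:ℝ)/2)) := by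
    norm_num
  rw [h3] at h2
  exact h2

lemma continuous_rpow32 (r : ℝ) : Continuous (fun y : ℝ => (r - y) ^ ((3:ℝ)/2)) :=
  continuous_iff_continuousAt.mpr fun _ => hasDerivAt_rpow32.continuousAt

lemma comp_lower {r c : ℝ} {f A : ℝ → ℝ} (hr : 0 < r) (hc : 0 ≤ c)
    (hf : ContinuousOn f (Set.Icc 0 r))
    (hder : ∀ x ∈ Set.Ioo (0:ℝ) r, HasDerivAt f (A x) x)
    (hA : ∀ x ∈ Set.Ioo (0:ℝ) r, (3:ℝ)/2 * c * Real.sqrt (r-x) ≤ A x) :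
    ∀ x ∈ Set.Icc (0:ℝ) r, c * (r - x) ^ ((3:ℝ)/2) ≤ f r - f x := by
  have hmono : MonotoneOn (fun x => f x + c * (r - x) ^ ((3:ℝ)/2)) (Set.Icc 0 r) := by
    apply monotoneOn_of_deriv_nonneg (convex_Icc 0 r)
      (hf.add (continuous_const.mul (continuous_rpow32 r)).continuousOn)
    · intro x hx
      rw [interior_Icc] at hx
      exact ((hder x hx).add
        (hasDerivAt_rpow32.const_mul c)).differentiableAt.differentiableWithinAt
    · intro x hx
      rw [interior_Icc] at hx
      have hd := (hder x hx).add ((hasDerivAt_rpow32 (r := r) (x := x)).const_mul c)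
      rw [show deriv (f + (fun _ => c) * fun y => (r - y) ^ ((3:ℝ)/2)) x = _ from hd.deriv]
      have hs := hA x hx
      rw [← Real.sqrt_eq_rpow]
      nlinarith [hs]
  intro x hx
  have hle : f x + c * (r - x) ^ ((3:ℝ)/2) ≤ f r + c * (r - r) ^ ((3:ℝ)/2) :=
    hmono hx (Set.mem_Icc.mpr ⟨hr.le, le_refl r⟩) hx.2
  rw [sub_self, Real.zero_rpow (by norm_num : ((3:ℝ)/2) ≠ 0), mul_zero, add_zero] at hle
  linarith

lemma comp_upper {r c : ℝ} {f A : ℝ → ℝ} (hr : 0 < r) (hc : 0 ≤ c)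
    (hf : ContinuousOn f (Set.Icc 0 r))
    (hder : ∀ x ∈ Set.Ioo (0:ℝ) r, HasDerivAt f (A x) x)
    (hA : ∀ x ∈ Set.Ioo (0:ℝ) r, A x ≤ (3:ℝ)/2 * c * Real.sqrt (r-x)) :
    ∀ x ∈ Set.Icc (0:ℝ) r, f r - f x ≤ c * (r - x) ^ ((3:ℝ)/2) := by
  have hmono : AntitoneOn (fun x => f x + c * (r - x) ^ ((3:ℝ)/2)) (Set.Icc 0 r) := by
    apply antitoneOn_of_deriv_nonpos (convex_Icc 0 r)
      (hf.add (continuous_const.mul (continuous_rpow32 r)).continuousOn)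
    · intro x hx
      rw [interior_Icc] at hx
      exact ((hder x hx).add
        (hasDerivAt_rpow32.const_mul c)).differentiableAt.differentiableWithinAt
    · intro x hx
      rw [interior_Icc] at hx
      have hd := (hder x hx).add ((hasDerivAt_rpow32 (r := r) (x := x)).const_mul c)
      rw [show deriv (f + (fun _ => c) * fun y => (r - y) ^ ((3:ℝ)/2)) x = _ from hd.deriv]
      have hs := hA x hx
      rw [← Real.sqrt_eq_rpow]
      nlinarith [hs]
  intro x hx
  have hle : f r + c * (r - r) ^ ((3:ℝ)/2) ≤ f x + c * (r - x) ^ ((3:ℝ)/2) :=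
    hmono hx (Set.mem_Icc.mpr ⟨hr.le, le_refl r⟩) hx.2
  rw [sub_self, Real.zero_rpow (by norm_num : ((3:ℝ)/2) ≠ 0), mul_zero, add_zero] at hle
  linarith

theorem T_monotone_and_asymp (r R : ℝ) (hr : 0 < r) (hR : r < R) (T : ℝ → ℝ)
    (γ : ℝ) (hγ : γ = G r R r + |(-Real.arccos (r / R) / Real.pi)| * r)
    (hmaps : ∀ y ∈ Set.Icc (G r R 0) γ, T y ∈ Set.Icc (0:ℝ) r)
    (hT : ∀ y ∈ Set.Icc (G r R 0) γ,
      G r R (T y) + |(-Real.arccos (r / R) / Real.pi)| * T y = y) :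
    StrictMonoOn T (Set.Icc (G r R 0) γ) ∧
    ∃ c₁ c₂ : ℝ, 0 < c₁ ∧ 0 < c₂ ∧ ∀ y ∈ Set.Icc (G r R 0) γ,
      c₁ * (r - T y) ^ ((3:ℝ)/2) ≤ γ - y ∧
      γ - y ≤ c₂ * (r - T y) ^ ((3:ℝ)/2) := by
  have hR0 : 0 < R := hr.trans hR
  have hpi := Real.pi_pos
  have habs : |(-Real.arccos (r / R) / Real.pi)| = Real.arccos (r/R) / Real.pi := by
    rw [neg_div, abs_neg, abs_of_nonneg (div_nonneg (Real.arccos_nonneg _) hpi.le)]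
  rw [habs] at hγ hT
  have hγF : γ = Faux r R r := hγ
  have hTF : ∀ y ∈ Set.Icc (G r R 0) γ, Faux r R (T y) = y := hT
  have hFmono : StrictMonoOn (Faux r R) (Set.Icc 0 r) := by
    apply strictMonoOn_of_deriv_pos (convex_Icc 0 r) (continuous_Faux r R).continuousOn
    intro x hx
    rw [interior_Icc] at hx
    rw [(hasDerivAt_Faux hr hR hx.1.le hx.2).deriv]
    exact Aaux_pos hr hR hx.1.le hx.2
  refine ⟨?_, ?_⟩
  · intro y₁ h₁ y₂ h₂ hlt
    by_contra hcon
    push_neg at hcon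
    have hmle := hFmono.monotoneOn (hmaps y₂ h₂) (hmaps y₁ h₁) hcon
    rw [hTF y₁ h₁, hTF y₂ h₂] at hmle
    linarith
  · obtain ⟨a, ha, hA_low⟩ := Aaux_lower hr hR
    have hs2r : 0 < Real.sqrt (2*r) := Real.sqrt_pos.mpr (by linarith)
    refine ⟨(2:ℝ)/3 * a, (2:ℝ)/3 * (1 / Real.sqrt (2*r)), by positivity, by positivity, ?_⟩
    intro y hy
    have hx := hmaps y hy
    have hyval : Faux r R (T y) = y := hTF y hy
    have hlow := comp_lower (c := (2:ℝ)/3 * a) hr (by positivity)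
      (continuous_Faux r R).continuousOn
      (fun x hxm => hasDerivAt_Faux hr hR hxm.1.le hxm.2)
      (fun x hxm => by
        have := hA_low x (Set.mem_Icc.mpr ⟨hxm.1.le, hxm.2.le⟩)
        calc (3:ℝ)/2 * ((2:ℝ)/3 * a) * Real.sqrt (r - x) = a * Real.sqrt (r - x) := by ring
          _ ≤ Aaux r R x := this)
      (T y) hx
    have hupp := comp_upper (c := (2:ℝ)/3 * (1 / Real.sqrt (2*r))) hr (by positivity)
      (continuous_Faux r R).continuousOn
      (fun x hxm => hasDerivAt_Faux hr hR hxm.1.le hxm.2)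
      (fun x hxm => by
        have h1 := Aaux_le hr hR hxm.1.le hxm.2.le
        calc Aaux r R x ≤ Real.sqrt (r - x) / Real.sqrt (2*r) := h1
          _ = (3:ℝ)/2 * ((2:ℝ)/3 * (1 / Real.sqrt (2*r))) * Real.sqrt (r - x) := by
            field_simp)
      (T y) hx
    rw [hyval, ← hγF] at hlow hupp
    exact ⟨hlow, hupp⟩
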